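/- arXiv:cond-mat/0310257 — 3 statements merged into one kernel-verified Lean document; each statement's English description precedes it below -/
import Mathlib

section
/- Let α > 0 and β = (α + √(4α + α²))³/(8α). Then Σ_{n=⌈(m+1)/2⌉}^{2m} (m/(n+m)) · binom(m+n, 2m-n) · α^n = (1/3) β^m (1 + O(1/m)) as m → ∞. -/
/-!
Put `i = m + n` and `j = 2m - n`, so that `i + j = 3m` and
`3 α^m · (m/(n+m)) C(m+n, 2m-n) α^n = (3m/i) C(i, j) α^i`. The Lucas-type sum
`Σ_{i+j=N} (N/i) C(i, j) x^i` equals `A^N + B^N` for the roots `A, B` of `X² = xX + x`, because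
both sides satisfy `u_{N+2} = x (u_{N+1} + u_N)`; for `x = α` the roots are
`(α ± √(α² + 4α))/2`. Terms with `i < j` vanish, and the range `n ≥ ⌊m/2⌋ + 1` omits only the
central term `n = m/2` for even `m`. So the sum is exactly
`(A^{3m} + B^{3m} - [m even] 2 α^{3m/2}) / (3 α^m)`, whereas `(1/3) β^m = A^{3m} / (3 α^m)`: the
relative error `(B/A)^{3m} - [m even] 2 (√α/A)^{3m}` even decays geometrically, as `|B| < A` and
`√α < A`.
-/

open Finset

section DiagChooseSum

variable {R : Type*} [CommRing R]

def diagChooseSum (x : R) (N : ℕ) : R :=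
  ∑ p ∈ antidiagonal N, (p.1.choose p.2 : R) * x ^ p.1

@[simp] lemma diagChooseSum_zero (x : R) : diagChooseSum x 0 = 1 := by
  simp [diagChooseSum]

@[simp] lemma diagChooseSum_one (x : R) : diagChooseSum x 1 = x := by
  simp [diagChooseSum, Nat.sum_antidiagonal_succ]

lemma diagChooseSum_add_two (x : R) (N : ℕ) :
    diagChooseSum x (N + 2) = x * (diagChooseSum x (N + 1) + diagChooseSum x N) := by
  simp only [diagChooseSum, Nat.sum_antidiagonal_succ (n := N + 1), Nat.sum_antidiagonal_succ',
    Nat.choose_succ_succ', Nat.choose_zero_succ, Nat.choose_zero_right, Nat.cast_add, add_mul,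
    sum_add_distrib, mul_add, mul_sum, pow_succ, mul_left_comm x, mul_comm _ x]
  ring

lemma pow_add_pow_eq_diagChooseSum {x A B : R} (hsum : A + B = x) (hprod : A * B = -x) (N : ℕ) :
    A ^ (N + 2) + B ^ (N + 2) = diagChooseSum x (N + 2) + x * diagChooseSum x N := by
  have hA : A ^ 2 = x * A + x := by linear_combination A * hsum - hprod
  have hB : B ^ 2 = x * B + x := by linear_combination B * hsum - hprod
  induction N using Nat.twoStepInduction with
  | zero =>
    simp [diagChooseSum_add_two]
    linear_combination (A + B + x) * hsum - 2 * hprod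
  | one =>
    simp [diagChooseSum_add_two]
    linear_combination ((A + B) ^ 2 + (A + B) * x + x ^ 2 + 3 * x) * hsum - 3 * (A + B) * hprod
  | more n ih₁ ih₂ =>
    linear_combination A ^ (n + 2) * hA + B ^ (n + 2) * hB + x * ih₂ + x * ih₁ -
      diagChooseSum_add_two x (n + 2) - x * diagChooseSum_add_two x n

end DiagChooseSum

section Lucas

variable {K : Type*} [Field K]

lemma natCast_add_two_div_mul_choose_succ_succ [CharZero K] {i j : ℕ} :
    ((i + j + 2 : ℕ) : K) / (i + 1 : ℕ) * (i + 1).choose (j + 1) =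
      (i + 1).choose (j + 1) + i.choose j := by
  have hchoose : (j + 1) * (i + 1).choose (j + 1) = (i + 1) * i.choose j := by
    rw [Nat.add_one_mul_choose_eq, mul_comm]
  have hnat : (i + j + 2) * (i + 1).choose (j + 1) =
      ((i + 1).choose (j + 1) + i.choose j) * (i + 1) := by
    rw [mul_comm _ (i + 1), mul_add, ← hchoose]
    ring
  rw [div_mul_eq_mul_div, div_eq_iff (Nat.cast_ne_zero.mpr i.succ_ne_zero)]
  exact_mod_cast hnat

lemma sum_antidiagonal_div_mul_choose [CharZero K] (x : K) (N : ℕ) :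
    ∑ p ∈ antidiagonal (N + 2), ((N + 2 : ℕ) : K) / p.1 * p.1.choose p.2 * x ^ p.1 =
      diagChooseSum x (N + 2) + x * diagChooseSum x N := by
  have hterm : ∀ p ∈ antidiagonal N,
      ((N + 2 : ℕ) : K) / (p.1 + 1 : ℕ) * (p.1 + 1).choose (p.2 + 1) * x ^ (p.1 + 1) =
        (p.1 + 1).choose (p.2 + 1) * x ^ (p.1 + 1) + x * (p.1.choose p.2 * x ^ p.1) := by
    rintro ⟨i, j⟩ h
    obtain rfl := HasAntidiagonal.mem_antidiagonal.mp h
    rw [natCast_add_two_div_mul_choose_succ_succ]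
    ring
  simp only [diagChooseSum, Nat.sum_antidiagonal_succ (n := N + 1), Nat.sum_antidiagonal_succ',
    sum_congr rfl hterm, sum_add_distrib, mul_sum]
  have hN : (N : K) + 2 ≠ 0 := by exact_mod_cast (N + 1).succ_ne_zero
  simp [Nat.choose_eq_zero_of_lt, add_assoc, div_self hN]

lemma sum_antidiagonal_div_mul_choose_eq_pow_add_pow [CharZero K] {x A B : K}
    (hsum : A + B = x) (hprod : A * B = -x) {N : ℕ} (hN : N ≠ 0) :
    ∑ p ∈ antidiagonal N, (N : K) / p.1 * p.1.choose p.2 * x ^ p.1 = A ^ N + B ^ N := by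
  obtain _ | _ | N := N
  · exact absurd rfl hN
  · simp [Nat.sum_antidiagonal_succ, hsum]
  · rw [sum_antidiagonal_div_mul_choose, pow_add_pow_eq_diagChooseSum hsum hprod]

lemma three_mul_pow_mul_sum_range_eq_sum_antidiagonal (x : K) (m : ℕ) :
    3 * x ^ m * ∑ n ∈ range (2 * m + 1), (m : K) / (n + m) * (m + n).choose (2 * m - n) * x ^ n =
      ∑ p ∈ antidiagonal (3 * m), ((3 * m : ℕ) : K) / p.1 * p.1.choose p.2 * x ^ p.1 := by
  rw [Nat.sum_antidiagonal_eq_sum_range_succ_mk, Nat.succ_eq_add_one,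
    show 3 * m + 1 = m + (2 * m + 1) by ring, sum_range_add _ m (2 * m + 1), mul_sum]
  have hlow : ∀ k ∈ range m, ((3 * m : ℕ) : K) / k * k.choose (3 * m - k) * x ^ k = 0 := by
    intro k hk
    rw [Nat.choose_eq_zero_of_lt (by grind), Nat.cast_zero, mul_zero, zero_mul]
  rw [sum_eq_zero hlow, zero_add]
  refine sum_congr rfl fun n _ => ?_
  rw [show 3 * m - (m + n) = 2 * m - n by omega]
  push_cast
  ring

lemma sum_Icc_add_middle_eq_sum_range [CharZero K] (x : K) {m : ℕ} (hm : m ≠ 0) :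
    ∑ n ∈ Icc ((m + 2) / 2) (2 * m), (m : K) / (n + m) * (m + n).choose (2 * m - n) * x ^ n +
        (if Even m then 2 / 3 * x ^ (m / 2) else 0) =
      ∑ n ∈ range (2 * m + 1), (m : K) / (n + m) * (m + n).choose (2 * m - n) * x ^ n := by
  set g : ℕ → K := fun n => (m : K) / (n + m) * (m + n).choose (2 * m - n) * x ^ n
  have hlow : ∀ n ∈ range (m / 2), g n = 0 := fun n hn => by
    simp only [g, Nat.choose_eq_zero_of_lt (by grind : m + n < 2 * m - n), Nat.cast_zero,
      mul_zero, zero_mul]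
  have hmiddle : g (m / 2) = if Even m then 2 / 3 * x ^ (m / 2) else 0 := by
    rcases Nat.even_or_odd' m with ⟨p, rfl | rfl⟩
    · have hp : (p : K) ≠ 0 := by exact_mod_cast (by omega : p ≠ 0)
      simp only [g, show 2 * p / 2 = p by omega, show 2 * (2 * p) - p = 2 * p + p by omega,
        Nat.choose_self, even_two_mul, if_true]
      push_cast
      field_simp
      ring
    · simp only [g, show (2 * p + 1) / 2 = p by omega,
        Nat.choose_eq_zero_of_lt (by omega : 2 * p + 1 + p < 2 * (2 * p + 1) - p),
        Nat.not_even_two_mul_add_one, if_false, Nat.cast_zero, mul_zero, zero_mul]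
  rw [← hmiddle, range_eq_Ico, ← sum_Ico_consecutive g (Nat.zero_le ((m + 2) / 2)) (by omega),
    Ico_add_one_right_eq_Icc, ← range_eq_Ico, show (m + 2) / 2 = m / 2 + 1 by omega, sum_range_succ,
    sum_eq_zero hlow, zero_add, add_comm]

lemma three_mul_pow_mul_sum_Icc [CharZero K] {x A B : K} (hsum : A + B = x) (hprod : A * B = -x)
    {m : ℕ} (hm : m ≠ 0) :
    3 * x ^ m *
        ∑ n ∈ Icc ((m + 2) / 2) (2 * m), (m : K) / (n + m) * (m + n).choose (2 * m - n) * x ^ n =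
      A ^ (3 * m) + B ^ (3 * m) - if Even m then 2 * x ^ (3 * m / 2) else 0 := by
  rw [← sum_antidiagonal_div_mul_choose_eq_pow_add_pow hsum hprod (by omega),
    ← three_mul_pow_mul_sum_range_eq_sum_antidiagonal, ← sum_Icc_add_middle_eq_sum_range x hm]
  split_ifs with h
  · obtain ⟨p, rfl⟩ := h
    rw [show (p + p) / 2 = p by omega, show 3 * (p + p) / 2 = p + p + p by omega]
    ring
  · ring

end Lucas

lemma natCast_mul_pow_le_inv_one_sub {K : Type*} [Field K] [LinearOrder K] [IsStrictOrderedRing K]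
    {r : K} (hr0 : 0 ≤ r) (hr1 : r < 1) (n : ℕ) : n * r ^ n ≤ (1 - r)⁻¹ :=
  calc (n : K) * r ^ n = ∑ _k ∈ range n, r ^ n := by simp
    _ ≤ ∑ k ∈ range n, r ^ k :=
      sum_le_sum fun k hk => pow_le_pow_of_le_one hr0 hr1.le (mem_range.mp hk).le
    _ ≤ r ^ 0 / (1 - r) := by rw [range_eq_Ico]; exact geom_sum_Ico_le_of_lt_one hr0 hr1
    _ = (1 - r)⁻¹ := by rw [pow_zero, one_div]

lemma abs_ite_even_le_two_mul_sqrt_pow {α : ℝ} (hα : 0 ≤ α) (m : ℕ) :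
    |if Even m then 2 * α ^ (3 * m / 2) else 0| ≤ 2 * √α ^ (3 * m) := by
  split_ifs with h
  · obtain ⟨p, rfl⟩ := h
    rw [show 3 * (p + p) / 2 = 3 * p by omega, show 3 * (p + p) = 2 * (3 * p) by ring,
      pow_mul √α, Real.sq_sqrt hα, abs_of_nonneg (by positivity)]
  · simp only [abs_zero]; positivity

lemma abs_pow_sub_div_pow_le {A B c y : ℝ} {n : ℕ} (hA : 0 < A) (hc : 0 ≤ c)
    (hy : |y| ≤ 2 * c ^ n) : |(B ^ n - y) / A ^ n| ≤ 3 * max (|B| / A) (c / A) ^ n := by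
  have hBn : (|B| / A) ^ n ≤ max (|B| / A) (c / A) ^ n :=
    pow_le_pow_left₀ (by positivity) (le_max_left _ _) n
  have hcn : (c / A) ^ n ≤ max (|B| / A) (c / A) ^ n :=
    pow_le_pow_left₀ (by positivity) (le_max_right _ _) n
  calc |(B ^ n - y) / A ^ n| ≤ (|B| ^ n + 2 * c ^ n) / A ^ n := by
        rw [abs_div, abs_of_pos (pow_pos hA n)]
        gcongr
        calc |B ^ n - y| ≤ |B ^ n| + |y| := abs_sub _ _
          _ ≤ |B| ^ n + 2 * c ^ n := by rw [abs_pow]; gcongr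
    _ = (|B| / A) ^ n + 2 * (c / A) ^ n := by rw [div_pow, div_pow]; ring
    _ ≤ 3 * max (|B| / A) (c / A) ^ n := by linarith

theorem exists_abs_sum_div_sub_one_le {α A B : ℝ} (hα : 0 < α) (hA : 0 < A) (hBA : |B| < A)
    (hsum : A + B = α) (hprod : A * B = -α) :
    ∃ C : ℝ, ∀ m : ℕ, 1 ≤ m →
      |(∑ n ∈ Icc ((m + 2) / 2) (2 * m), (m : ℝ) / (n + m) * (m + n).choose (2 * m - n) * α ^ n)
        / ((1 / 3) * (A ^ 3 / α) ^ m) - 1| ≤ C / m := by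
  have hαA : √α < A := by
    rw [Real.sqrt_lt' hA]
    nlinarith [mul_pos hα hA]
  set r := max (|B| / A) (√α / A)
  have hr0 : 0 ≤ r := le_max_of_le_left (by positivity)
  have hr1 : r < 1 := max_lt ((div_lt_one hA).mpr hBA) ((div_lt_one hA).mpr hαA)
  refine ⟨3 * (1 - r)⁻¹, fun m hm => ?_⟩
  set S := ∑ n ∈ Icc ((m + 2) / 2) (2 * m), (m : ℝ) / (n + m) * (m + n).choose (2 * m - n) * α ^ n
  set E : ℝ := if Even m then 2 * α ^ (3 * m / 2) else 0
  have hexact : 3 * α ^ m * S = A ^ (3 * m) + B ^ (3 * m) - E :=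
    three_mul_pow_mul_sum_Icc hsum hprod (by omega)
  have herr : S / ((1 / 3) * (A ^ 3 / α) ^ m) - 1 = (B ^ (3 * m) - E) / A ^ (3 * m) := by
    rw [div_pow, ← pow_mul]
    field_simp
    linear_combination hexact
  rw [herr, le_div_iff₀ (by positivity)]
  calc _ ≤ 3 * r ^ (3 * m) * m :=
        mul_le_mul_of_nonneg_right (abs_pow_sub_div_pow_le hA (Real.sqrt_nonneg α)
          (abs_ite_even_le_two_mul_sqrt_pow hα.le m)) (by positivity)
    _ ≤ 3 * (m * r ^ m) := by
        nlinarith [pow_le_pow_of_le_one hr0 hr1.le (by omega : m ≤ 3 * m), m.cast_nonneg (α := ℝ)]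
    _ ≤ 3 * (1 - r)⁻¹ := by gcongr; exact natCast_mul_pow_le_inv_one_sub hr0 hr1 m

/-- Saddle point lemma: for `α > 0` and `β = (α + √(4α + α²))³/(8α)`,
`Σ_{n=⌈(m+1)/2⌉}^{2m} (m/(n+m)) · C(m+n, 2m-n) · α^n = (1/3) β^m (1 + O(1/m))`
as `m → ∞`. -/
theorem stmt_11 (α : ℝ) (hα : 0 < α)
    (β : ℝ) (hβ : β = (α + Real.sqrt (4 * α + α ^ 2)) ^ 3 / (8 * α)) :
    ∃ C : ℝ, ∀ m : ℕ, 1 ≤ m →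
      |(∑ n ∈ Finset.Icc ((m + 2) / 2) (2 * m),
          ((m : ℝ) / (n + m)) * (Nat.choose (m + n) (2 * m - n)) * α ^ n)
        / ((1 / 3) * β ^ m) - 1| ≤ C / m := by
  set s := √(4 * α + α ^ 2)
  have hs : s ^ 2 = 4 * α + α ^ 2 := Real.sq_sqrt (by positivity)
  have hαs : α < s := by nlinarith [Real.sqrt_nonneg (4 * α + α ^ 2)]
  have hβA : β = ((α + s) / 2) ^ 3 / α := by rw [hβ]; field_simp; ring
  rw [hβA]
  refine exists_abs_sum_div_sub_one_le (B := (α - s) / 2) hα (by positivity) ?_ (by ring)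
    (by linear_combination -hs / 4)
  rw [abs_lt]
  constructor <;> linarith
end

section
/- For α > 0, the function g(y) = α^y (1+y)^{1+y} / ((2-y)^{2-y} (2y-1)^{2y-1}) on (1/2, 2) attains its maximum at y* = 1/2 + (3/2)√(α/(4+α)), and g(y*) = (α + √(4α + α²))³/(8α). -/
/-!
On `(1/2, 2)` write `g = exp ∘ logG α`. The derivative of `logG α` is
`log (α (1+y)(2-y) / (2y-1)²)`, and `α (1+y)(2-y) - (2y-1)² = 9α/4 - (4+α)(y-1/2)²` is
decreasing for `y > 1/2`, with its zero at `y* = 1/2 + (3/2) s`, `s = √(α/(4+α))`. So `logG α`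
increases up to `y*` and decreases after it. At a critical point the value of `g` simplifies to
`(2y-1)(1+y)/(2-y)²`, which at `y*` equals `2s(1+s)/(1-s)² = (α + √(4α+α²))³/(8α)`.
-/

open Real Set

noncomputable def logG (α y : ℝ) : ℝ :=
  y * log α + (1 + y) * log (1 + y) - (2 - y) * log (2 - y) - (2 * y - 1) * log (2 * y - 1)

lemma exp_logG {α y : ℝ} (hα : 0 < α) (hy : y ∈ Ioo (1 / 2 : ℝ) 2) :
    exp (logG α y) =
      α ^ y * (1 + y) ^ (1 + y) / ((2 - y) ^ (2 - y) * (2 * y - 1) ^ (2 * y - 1)) := by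
  obtain ⟨hy₁, hy₂⟩ := hy
  rw [rpow_def_of_pos hα, rpow_def_of_pos (by linarith), rpow_def_of_pos (by linarith),
    rpow_def_of_pos (by linarith), ← exp_add, ← exp_add, ← exp_sub, logG]
  congr 1
  ring

lemma hasDerivAt_logG (α : ℝ) {y : ℝ} (hy : y ∈ Ioo (1 / 2 : ℝ) 2) :
    HasDerivAt (logG α) (log α + log (1 + y) + log (2 - y) - 2 * log (2 * y - 1)) y := by
  obtain ⟨hy₁, hy₂⟩ := hy
  have hu := (hasDerivAt_mul_log (x := 1 + y) (by linarith)).comp y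
    ((hasDerivAt_id y).const_add 1)
  have hv := (hasDerivAt_mul_log (x := 2 - y) (by linarith)).comp y
    ((hasDerivAt_id y).const_sub 2)
  have hw := (hasDerivAt_mul_log (x := 2 * y - 1) (by linarith)).comp y
    (((hasDerivAt_id y).const_mul 2).sub_const 1)
  exact ((((hasDerivAt_id y).mul_const (log α)).add hu).sub hv).sub hw |>.congr_deriv (by ring)

lemma critical_sub_eq {α c y : ℝ} (hc : α * (1 + c) * (2 - c) = (2 * c - 1) ^ 2) :
    α * (1 + y) * (2 - y) - (2 * y - 1) ^ 2 = (4 + α) * (c - y) * (c + y - 1) := by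
  linear_combination hc

lemma logG_deriv_nonneg_of_le_critical {α c y : ℝ} (hα : 0 < α)
    (hcrit : α * (1 + c) * (2 - c) = (2 * c - 1) ^ 2)
    (hy : y ∈ Ioo (1 / 2 : ℝ) 2) (hyc : y ≤ c) :
    0 ≤ log α + log (1 + y) + log (2 - y) - 2 * log (2 * y - 1) := by
  obtain ⟨hy₁, hy₂⟩ := hy
  have hle : (2 * y - 1) ^ 2 ≤ α * (1 + y) * (2 - y) := by
    have := critical_sub_eq (y := y) hcrit
    nlinarith [mul_nonneg (mul_nonneg (by linarith : (0:ℝ) ≤ 4 + α) (sub_nonneg.2 hyc))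
      (by linarith : (0:ℝ) ≤ c + y - 1)]
  have := log_le_log (by nlinarith) hle
  rw [log_mul (by positivity) (by linarith), log_mul hα.ne' (by linarith), log_pow] at this
  push_cast at this
  linarith

lemma logG_deriv_nonpos_of_critical_le {α c y : ℝ} (hα : 0 < α) (hc : 1 / 2 < c)
    (hcrit : α * (1 + c) * (2 - c) = (2 * c - 1) ^ 2)
    (hy : y ∈ Ioo (1 / 2 : ℝ) 2) (hcy : c ≤ y) :
    log α + log (1 + y) + log (2 - y) - 2 * log (2 * y - 1) ≤ 0 := by
  obtain ⟨hy₁, hy₂⟩ := hy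
  have hle : α * (1 + y) * (2 - y) ≤ (2 * y - 1) ^ 2 := by
    have := critical_sub_eq (y := y) hcrit
    nlinarith [mul_nonneg (mul_nonneg (by linarith : (0:ℝ) ≤ 4 + α) (sub_nonneg.2 hcy))
      (by linarith : (0:ℝ) ≤ c + y - 1)]
  have := log_le_log (mul_pos (mul_pos hα (by linarith)) (by linarith)) hle
  rw [log_mul (by positivity) (by linarith), log_mul hα.ne' (by linarith), log_pow] at this
  push_cast at this
  linarith

lemma isMaxOn_logG {α c : ℝ} (hα : 0 < α) (hc : c ∈ Ioo (1 / 2 : ℝ) 2)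
    (hcrit : α * (1 + c) * (2 - c) = (2 * c - 1) ^ 2) :
    IsMaxOn (logG α) (Ioo (1 / 2) 2) c := by
  have hsub₁ : Ioo (1 / 2) c ⊆ Ioo (1 / 2 : ℝ) 2 := Ioo_subset_Ioo_right hc.2.le
  have hsub₂ : Ioo c 2 ⊆ Ioo (1 / 2 : ℝ) 2 := Ioo_subset_Ioo_left hc.1.le
  refine isMaxOn_Ioo_of_deriv (hasDerivAt_logG α hc).continuousAt
    (fun y hy ↦ (hasDerivAt_logG α (hsub₁ hy)).differentiableAt.differentiableWithinAt)
    (fun y hy ↦ (hasDerivAt_logG α (hsub₂ hy)).differentiableAt.differentiableWithinAt)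
    (fun y hy ↦ ?_) (fun y hy ↦ ?_)
  · rw [(hasDerivAt_logG α (hsub₁ hy)).deriv]
    exact logG_deriv_nonneg_of_le_critical hα hcrit (hsub₁ hy) hy.2.le
  · rw [(hasDerivAt_logG α (hsub₂ hy)).deriv]
    exact logG_deriv_nonpos_of_critical_le hα hc.1 hcrit (hsub₂ hy) hy.1.le

/-- At a critical point, `log α = log ((2y-1)² / ((1+y)(2-y)))` and the exponents telescope. -/
lemma exp_logG_of_critical {α y : ℝ} (hy : y ∈ Ioo (1 / 2 : ℝ) 2)
    (hcrit : α * (1 + y) * (2 - y) = (2 * y - 1) ^ 2) :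
    exp (logG α y) = (2 * y - 1) * (1 + y) / (2 - y) ^ 2 := by
  obtain ⟨hy₁, hy₂⟩ := hy
  have hu : 1 + y ≠ 0 := by linarith
  have hv : 2 - y ≠ 0 := by linarith
  have hw : 2 * y - 1 ≠ 0 := by linarith
  have hlogα : log α = 2 * log (2 * y - 1) - log (1 + y) - log (2 - y) := by
    rw [show α = (2 * y - 1) ^ 2 / ((1 + y) * (2 - y)) by field_simp; linear_combination hcrit,
      log_div (by positivity) (by positivity), log_mul hu hv, log_pow]
    push_cast
    ring
  have hpos : 0 < (2 * y - 1) * (1 + y) / (2 - y) ^ 2 :=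
    div_pos (mul_pos (by linarith) (by linarith)) (by positivity)
  rw [← exp_log hpos, logG, hlogα, log_div (by positivity) (by positivity), log_mul hw hu,
    log_pow]
  congr 1
  push_cast
  ring

section
variable {α s : ℝ} (hs : s ^ 2 * (4 + α) = α)
include hs

lemma lt_one_of_sq_mul_four_add (hα : 0 < α) : s < 1 := by
  by_contra! h
  nlinarith [one_le_pow₀ (n := 2) h]

lemma half_add_mem_Ioo (hα : 0 < α) (hs0 : 0 < s) :
    1 / 2 + 3 / 2 * s ∈ Ioo (1 / 2 : ℝ) 2 := by
  have := lt_one_of_sq_mul_four_add hs hα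
  constructor <;> linarith

lemma critical_half_add :
    α * (1 + (1 / 2 + 3 / 2 * s)) * (2 - (1 / 2 + 3 / 2 * s)) =
      (2 * (1 / 2 + 3 / 2 * s) - 1) ^ 2 := by
  linear_combination (-9 / 4) * hs

lemma critical_value_half_add (hα : 0 < α) (hs0 : 0 < s) :
    (2 * (1 / 2 + 3 / 2 * s) - 1) * (1 + (1 / 2 + 3 / 2 * s)) / (2 - (1 / 2 + 3 / 2 * s)) ^ 2 =
      (α + √(4 * α + α ^ 2)) ^ 3 / (8 * α) := by
  have hs1 : 0 < 1 - s := by linarith [lt_one_of_sq_mul_four_add hs hα]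
  rw [show 4 * α + α ^ 2 = (α / s) ^ 2 by field_simp; linear_combination hs,
    sqrt_sq (by positivity)]
  calc _ = 2 * s * (1 + s) / (1 - s) ^ 2 := by
        rw [div_eq_div_iff (pow_ne_zero 2 (by linarith)) (by positivity)]; ring
    _ = α ^ 2 * (1 + s) ^ 3 / (8 * s ^ 3) := by
      rw [div_eq_div_iff (by positivity) (by positivity)]
      linear_combination (1 + s) * (4 * s ^ 2 + α * (1 - s ^ 2)) * hs
    _ = _ := by field_simp; ring

end

/-- For `α > 0`, the function
`g(y) = α^y (1+y)^{1+y} / ((2-y)^{2-y} (2y-1)^{2y-1})` on `(1/2, 2)` attains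
its maximum at `y* = 1/2 + (3/2)√(α/(4+α))`, and
`g(y*) = (α + √(4α + α²))³/(8α)`. -/
theorem stmt_12 (α : ℝ) (hα : 0 < α) (g : ℝ → ℝ)
    (hg : ∀ y, g y = α ^ y * (1 + y) ^ (1 + y) / ((2 - y) ^ (2 - y) * (2 * y - 1) ^ (2 * y - 1)))
    (ystar : ℝ) (hy : ystar = 1 / 2 + (3 / 2) * Real.sqrt (α / (4 + α))) :
    ystar ∈ Set.Ioo (1 / 2 : ℝ) 2 ∧
    (∀ y ∈ Set.Ioo (1 / 2 : ℝ) 2, g y ≤ g ystar) ∧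
    g ystar = (α + Real.sqrt (4 * α + α ^ 2)) ^ 3 / (8 * α) := by
  have hs₀ : 0 < √(α / (4 + α)) := sqrt_pos.2 (by positivity)
  have hs : √(α / (4 + α)) ^ 2 * (4 + α) = α := by
    rw [sq_sqrt (by positivity)]; field_simp
  subst hy
  have hmem := half_add_mem_Ioo hs hα hs₀
  have hcrit := critical_half_add hs
  have hg_exp : ∀ y ∈ Ioo (1 / 2 : ℝ) 2, g y = exp (logG α y) := fun y hy ↦ by
    rw [hg, exp_logG hα hy]
  refine ⟨hmem, fun y hy ↦ ?_, ?_⟩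
  · rw [hg_exp y hy, hg_exp _ hmem]
    exact exp_le_exp.2 (isMaxOn_logG hα hmem hcrit hy)
  · rw [hg_exp _ hmem, exp_logG_of_critical hmem hcrit, critical_value_half_add hs hα hs₀]
end

section
/- For -N/2 ≤ β ≤ N/2 with N a positive integer, exp(-π²β²/(2N)) (1 - C'β⁴/N⁴)^N ≤ cos^N(πβ/N) ≤ exp(-π²β²/(2N)) for an appropriate absolute constant C' > 0. -/
/-!
Upper bound: `cos x = 1 - 2 sin² (x/2)` together with `sin y ≥ y - y³/6` gives
`cos x ≤ (1 - x²/4)² ≤ exp (-x²/4)² = exp (-x²/2)` for `x² ≤ 4`.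

Lower bound: the constant `C' = 16` is forced, since for `N = 2`, `β = 1` the cosine vanishes.
With `θ = πβ/N` one has `C'β⁴/N⁴ = 16θ⁴/π⁴`, and it suffices to show
`1 - 16θ⁴/π⁴ ≤ cos θ · (1 + θ²/2 + θ⁴/8)` on `[0, π/2]`, the second factor being a lower bound
for `exp (θ²/2)`. For `θ ≤ 1` this follows from `cos θ ≥ 1 - θ²/2 + θ⁴/32` (double angle).
Near `π/2` both sides vanish; writing `s = π/2 - θ`, the left side is
`2s(π + 2θ)(π² + 4θ²)/π⁴` while `cos θ = sin s ≥ s(1 - s²/6)`, and the remaining polynomial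
inequality holds with room to spare once `π` is replaced by `3.14` or `3.15`.
-/

open Real

namespace Real

lemma cos_le_sq_one_sub_sq_div_four {x : ℝ} (hx : x ^ 2 ≤ 24) : cos x ≤ (1 - x ^ 2 / 4) ^ 2 := by
  set y := |x| / 2 with hy
  have hy0 : 0 ≤ y := by positivity
  have hxy : x ^ 2 = 4 * y ^ 2 := by rw [hy, div_pow, sq_abs]; ring
  have hsub : 0 ≤ y - y ^ 3 / 6 := by nlinarith
  have hsin : (y - y ^ 3 / 6) ^ 2 ≤ sin y ^ 2 := pow_le_pow_left₀ hsub (sin_ge_sub_cube hy0) 2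
  have hcos : cos x = 1 - 2 * sin y ^ 2 := by
    rw [← cos_abs, show |x| = 2 * y by rw [hy]; ring, cos_two_mul, cos_sq']
    ring
  rw [hcos, hxy]
  nlinarith [pow_nonneg hy0 6]

lemma cos_le_exp_neg_sq_div_two {x : ℝ} (hx : x ^ 2 ≤ 4) : cos x ≤ exp (-(x ^ 2 / 2)) :=
  calc cos x ≤ (1 - x ^ 2 / 4) ^ 2 := cos_le_sq_one_sub_sq_div_four (by linarith)
    _ ≤ exp (-(x ^ 2 / 4)) ^ 2 :=
      pow_le_pow_left₀ (by linarith) (by linarith [add_one_le_exp (-(x ^ 2 / 4))]) 2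
    _ = exp (-(x ^ 2 / 2)) := by rw [← exp_nat_mul]; ring_nf

lemma one_sub_sq_div_two_add_le_cos {x : ℝ} (hx : x ^ 2 ≤ 8) :
    1 - x ^ 2 / 2 + x ^ 4 / 32 ≤ cos x :=
  calc 1 - x ^ 2 / 2 + x ^ 4 / 32 = 2 * (1 - (x / 2) ^ 2 / 2) ^ 2 - 1 := by ring
    _ ≤ 2 * cos (x / 2) ^ 2 - 1 := by
      gcongr
      · nlinarith
      · exact one_sub_sq_div_two_le_cos
    _ = cos x := by rw [← cos_two_mul]; ring_nf

lemma one_sub_pow_four_le_cos_mul_of_sq_le_one {x : ℝ} (hx : x ^ 2 ≤ 1) :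
    1 - 16 * x ^ 4 / π ^ 4 ≤ cos x * (1 + x ^ 2 / 2 + x ^ 4 / 8) :=
  calc 1 - 16 * x ^ 4 / π ^ 4 ≤ 1 - 9 / 64 * x ^ 4 := by
        have : 9 / 64 * x ^ 4 ≤ 16 * x ^ 4 / π ^ 4 := by
          rw [le_div_iff₀ (by positivity)]
          nlinarith [pow_lt_pow_left₀ pi_lt_d2 pi_pos.le (by norm_num : 4 ≠ 0),
            pow_nonneg (sq_nonneg x) 2]
        linarith
    _ ≤ (1 - x ^ 2 / 2 + x ^ 4 / 32) * (1 + x ^ 2 / 2 + x ^ 4 / 8) := by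
        nlinarith [sq_nonneg x, pow_nonneg (sq_nonneg x) 3,
          mul_nonneg (pow_nonneg (sq_nonneg x) 2) (sub_nonneg.2 hx)]
    _ ≤ cos x * (1 + x ^ 2 / 2 + x ^ 4 / 8) := by
        gcongr
        exact one_sub_sq_div_two_add_le_cos (by linarith)

lemma one_sub_pow_four_le_cos_mul_of_one_le {x : ℝ} (h1 : 1 ≤ x) (h2 : x ≤ π / 2) :
    1 - 16 * x ^ 4 / π ^ 4 ≤ cos x * (1 + x ^ 2 / 2 + x ^ 4 / 8) := by
  set s := π / 2 - x with hs
  have hs0 : 0 ≤ s := by linarith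
  have hs1 : s ≤ 1.575 - x := by linarith [pi_lt_d2]
  have hcos : s * (1 - s ^ 2 / 6) ≤ cos x := by
    rw [← sin_pi_div_two_sub]; linarith [sin_ge_sub_cube hs0]
  have hfactor : π ^ 4 - 16 * x ^ 4 = s * (2 * (π + 2 * x) * (π ^ 2 + 4 * x ^ 2)) := by
    rw [hs]; ring
  have key : 2 * (π + 2 * x) * (π ^ 2 + 4 * x ^ 2)
      ≤ π ^ 4 * (1 - s ^ 2 / 6) * (1 + x ^ 2 / 2 + x ^ 4 / 8) :=
    calc 2 * (π + 2 * x) * (π ^ 2 + 4 * x ^ 2)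
          ≤ 2 * (3.15 + 2 * x) * (3.15 ^ 2 + 4 * x ^ 2) := by
          gcongr <;> linarith [pi_lt_d2, pi_pos]
      _ ≤ 3.14 ^ 4 * (1 - (1.575 - x) ^ 2 / 6) * (1 + x ^ 2 / 2 + x ^ 4 / 8) := by
          have hu : 0 ≤ x - 1 := by linarith
          have hv : 0 ≤ 1.575 - x := by linarith
          nlinarith [mul_nonneg (pow_nonneg hu 3) hv, mul_nonneg (pow_nonneg hu 4) hv,
            pow_nonneg hu 2, pow_nonneg hu 3, pow_nonneg hu 4]
      _ ≤ π ^ 4 * (1 - s ^ 2 / 6) * (1 + x ^ 2 / 2 + x ^ 4 / 8) := by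
          gcongr
          · nlinarith
          · exact pi_gt_d2.le
  have hπ : 0 < π ^ 4 := by positivity
  calc 1 - 16 * x ^ 4 / π ^ 4 = s * (2 * (π + 2 * x) * (π ^ 2 + 4 * x ^ 2)) / π ^ 4 := by
        rw [← hfactor]; field_simp
    _ ≤ s * (π ^ 4 * (1 - s ^ 2 / 6) * (1 + x ^ 2 / 2 + x ^ 4 / 8)) / π ^ 4 := by gcongr
    _ = s * (1 - s ^ 2 / 6) * (1 + x ^ 2 / 2 + x ^ 4 / 8) := by field_simp
    _ ≤ cos x * (1 + x ^ 2 / 2 + x ^ 4 / 8) := by gcongr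

lemma exp_neg_sq_div_two_mul_one_sub_pow_four_le_cos {x : ℝ} (hx : |x| ≤ π / 2) :
    exp (-(x ^ 2 / 2)) * (1 - 16 * x ^ 4 / π ^ 4) ≤ cos x := by
  have hcos : 0 ≤ cos x := cos_nonneg_of_neg_pi_div_two_le_of_le (abs_le.1 hx).1 (abs_le.1 hx).2
  have hexp : 1 + x ^ 2 / 2 + x ^ 4 / 8 ≤ exp (x ^ 2 / 2) := by
    convert quadratic_le_exp_of_nonneg (x := x ^ 2 / 2) (by positivity) using 1; ring
  have hpoly : 1 - 16 * x ^ 4 / π ^ 4 ≤ cos x * (1 + x ^ 2 / 2 + x ^ 4 / 8) := by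
    rcases le_total |x| 1 with h | h
    · exact one_sub_pow_four_le_cos_mul_of_sq_le_one (by nlinarith [sq_abs x, abs_nonneg x])
    · simpa only [cos_abs, sq_abs, (by decide : Even 4).pow_abs] using
        one_sub_pow_four_le_cos_mul_of_one_le h hx
  rw [exp_neg, inv_mul_le_iff₀ (exp_pos _)]
  exact hpoly.trans (by rw [mul_comm]; gcongr)

end Real

/-- For `-N/2 ≤ β ≤ N/2` (`N` a positive integer),
`exp(-π²β²/(2N)) (1 - C'β⁴/N⁴)^N ≤ cos^N(πβ/N) ≤ exp(-π²β²/(2N))`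
for an appropriate absolute constant `C' > 0`. -/
theorem stmt_17 :
    ∃ C' : ℝ, 0 < C' ∧ ∀ N : ℕ, 0 < N → ∀ β : ℝ, |β| ≤ (N : ℝ) / 2 →
      Real.exp (-(Real.pi ^ 2 * β ^ 2) / (2 * N)) * (1 - C' * β ^ 4 / (N : ℝ) ^ 4) ^ N
          ≤ Real.cos (Real.pi * β / N) ^ N ∧
      Real.cos (Real.pi * β / N) ^ N ≤ Real.exp (-(Real.pi ^ 2 * β ^ 2) / (2 * N)) := by
  refine ⟨16, by norm_num, fun N hN β hβ => ?_⟩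
  have hN : (0 : ℝ) < N := by exact_mod_cast hN
  set θ := π * β / N with hθ
  have hθπ : |θ| ≤ π / 2 := by
    rw [hθ, abs_div, abs_mul, abs_of_pos pi_pos, Nat.abs_cast, div_le_iff₀ hN]
    nlinarith [pi_pos]
  have hexp : exp (-(π ^ 2 * β ^ 2) / (2 * N)) = exp (-(θ ^ 2 / 2)) ^ N := by
    rw [← exp_nat_mul, hθ]; congr 1; field_simp
  have hfac : 16 * β ^ 4 / (N : ℝ) ^ 4 = 16 * θ ^ 4 / π ^ 4 := by rw [hθ]; field_simp
  have hθ4 : |θ| ^ 4 ≤ (π / 2) ^ 4 := pow_le_pow_left₀ (abs_nonneg θ) hθπ 4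
  have hfac0 : 0 ≤ 1 - 16 * θ ^ 4 / π ^ 4 := by
    rw [(by decide : Even 4).pow_abs] at hθ4
    rw [sub_nonneg, div_le_one (by positivity)]; linarith
  have hcos : 0 ≤ cos θ :=
    cos_nonneg_of_neg_pi_div_two_le_of_le (abs_le.1 hθπ).1 (abs_le.1 hθπ).2
  have hθ2 : θ ^ 2 ≤ 4 := by nlinarith [sq_abs θ, abs_nonneg θ, pi_le_four]
  rw [hexp, hfac, ← mul_pow]
  exact ⟨pow_le_pow_left₀ (by positivity) (exp_neg_sq_div_two_mul_one_sub_pow_four_le_cos hθπ) N,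
    pow_le_pow_left₀ hcos (cos_le_exp_neg_sq_div_two hθ2) N⟩
end
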